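/- arXiv:2402.11118 — 2 statements merged into one kernel-verified Lean document; each statement's English description precedes it below -/
import Mathlib

section
/- Let H = (V, E) be a hypergraph and let X ⊆ V, O ⊆ V be disjoint sets (positions of Maker and Breaker). Define the Erdős–Selfridge weight of a hyperedge h to be 2^(|X ∩ h| − |h|) if h ∩ O = ∅ and 0 otherwise, and the score of the position to be the sum of weights over all hyperedges. If Breaker, on her move, plays a vertex v maximizing the total weight of hyperedges containing v (among hyperedges disjoint from O), and Maker then plays any vertex u ∉ X ∪ O ∪ {v}, then the score after Maker's move is at most the score before Breaker's move. -/
/-- The Erdős–Selfridge score of a position `(X, O)` (Maker's and Breaker's claimed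
vertices): the sum over hyperedges `h` disjoint from `O` of `2 ^ (|X ∩ h| - |h|)`. -/
def esScore {α : Type*} [DecidableEq α] (E : Finset (Finset α))
    (X O : Finset α) : ℚ :=
  ∑ h ∈ E, if h ∩ O = ∅ then (2 : ℚ) ^ (((X ∩ h).card : ℤ) - (h.card : ℤ)) else 0

/-- The Erdős–Selfridge weight of a vertex `u`: the total weight of the hyperedges
containing `u`, among hyperedges disjoint from `O`. -/
def esWeight {α : Type*} [DecidableEq α] (E : Finset (Finset α))
    (X O : Finset α) (u : α) : ℚ :=
  ∑ h ∈ E.filter (fun h => u ∈ h ∧ h ∩ O = ∅),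
    (2 : ℚ) ^ (((X ∩ h).card : ℤ) - (h.card : ℤ))

/-- If Breaker plays a vertex `v` of maximum weight and Maker then plays any vertex
`u`, the score after Maker's move is at most the score before Breaker's move. -/
theorem esScore_nonincreasing {α : Type*} [DecidableEq α] (V : Finset α)
    (E : Finset (Finset α)) (X O : Finset α) (hX : X ⊆ V) (hO : O ⊆ V)
    (hdisj : Disjoint X O) (v : α) (hvV : v ∈ V) (hvfree : v ∉ X ∪ O)
    (hmax : ∀ w ∈ V, w ∉ X ∪ O → esWeight E X O w ≤ esWeight E X O v)
    (u : α) (huV : u ∈ V) (hufree : u ∉ X ∪ O ∪ {v}) :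
    esScore E (insert u X) (insert v O) ≤ esScore E X O := by
  classical
  have huX : u ∉ X := fun hc => hufree (by simp [hc])
  have huXO : u ∉ X ∪ O := fun hc => hufree (by simp at hc ⊢; tauto)
  have hWu : esWeight E X O u ≤ esWeight E X O v := hmax u huV huXO
  set f : Finset α → ℚ := fun h => (2 : ℚ) ^ (((X ∩ h).card : ℤ) - (h.card : ℤ)) with hfdef
  have key : ∀ h ∈ E,
      (if h ∩ insert v O = ∅ then
          (2 : ℚ) ^ ((((insert u X) ∩ h).card : ℤ) - (h.card : ℤ)) else 0)
      ≤ (if h ∩ O = ∅ then f h else 0)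
        - (if v ∈ h ∧ h ∩ O = ∅ then f h else 0)
        + (if u ∈ h ∧ h ∩ O = ∅ then f h else 0) := by
    intro h _
    have hfnn : (0 : ℚ) ≤ f h := by rw [hfdef]; positivity
    by_cases hv : v ∈ h
    · have h1 : ¬ h ∩ insert v O = ∅ := by
        intro hh
        have : v ∈ h ∩ insert v O := by simp [hv]
        rw [hh] at this; simp at this
      rw [if_neg h1]
      by_cases hO : h ∩ O = ∅
      · by_cases hu : u ∈ h <;> simp [hu, hv, hO, hfnn]
      · simp [hO]
    · have heq : h ∩ insert v O = h ∩ O := by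
        ext x
        simp only [Finset.mem_inter, Finset.mem_insert]
        constructor
        · rintro ⟨hxh, rfl | hxO⟩
          · exact absurd hxh hv
          · exact ⟨hxh, hxO⟩
        · rintro ⟨hxh, hxO⟩
          exact ⟨hxh, Or.inr hxO⟩
      have h1 : h ∩ insert v O = ∅ ↔ h ∩ O = ∅ := by rw [heq]
      by_cases hO : h ∩ O = ∅
      · rw [if_pos (h1.mpr hO), if_pos hO, if_neg (fun hc => hv hc.1)]
        by_cases hu : u ∈ h
        · have hins : insert u X ∩ h = insert u (X ∩ h) := by
            ext x
            simp only [Finset.mem_inter, Finset.mem_insert]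
            constructor
            · rintro ⟨rfl | hx, hxh⟩
              · exact Or.inl rfl
              · exact Or.inr ⟨hx, hxh⟩
            · rintro (rfl | ⟨hx, hxh⟩)
              · exact ⟨Or.inl rfl, hu⟩
              · exact ⟨Or.inr hx, hxh⟩
          have hcard : (((insert u X ∩ h).card : ℤ)) = ((X ∩ h).card : ℤ) + 1 := by
            rw [hins, Finset.card_insert_of_notMem (by simp [huX])]
            push_cast; ring
          rw [hcard, if_pos ⟨hu, hO⟩]
          have : ((X ∩ h).card : ℤ) + 1 - (h.card : ℤ)
              = (((X ∩ h).card : ℤ) - (h.card : ℤ)) + 1 := by ring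
          rw [this, zpow_add_one₀ (by norm_num)]
          rw [hfdef]
          ring_nf
          exact le_refl _
        · have hins : insert u X ∩ h = X ∩ h := by
            ext x
            simp only [Finset.mem_inter, Finset.mem_insert]
            constructor
            · rintro ⟨rfl | hx, hxh⟩
              · exact absurd hxh hu
              · exact ⟨hx, hxh⟩
            · rintro ⟨hx, hxh⟩; exact ⟨Or.inr hx, hxh⟩
          rw [hins, if_neg (fun hc => hu hc.1), hfdef]
          simp
      · rw [if_neg (fun hc => hO (h1.mp hc)), if_neg hO,
          if_neg (fun hc => hO hc.2), if_neg (fun hc => hO hc.2)]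
        norm_num
  have hsum := Finset.sum_le_sum key
  have e1 : esScore E (insert u X) (insert v O)
      = ∑ h ∈ E, (if h ∩ insert v O = ∅ then
          (2 : ℚ) ^ ((((insert u X) ∩ h).card : ℤ) - (h.card : ℤ)) else 0) := rfl
  have e2 : ∑ h ∈ E, ((if h ∩ O = ∅ then f h else 0)
        - (if v ∈ h ∧ h ∩ O = ∅ then f h else 0)
        + (if u ∈ h ∧ h ∩ O = ∅ then f h else 0))
      = esScore E X O - esWeight E X O v + esWeight E X O u := by
    rw [Finset.sum_add_distrib, Finset.sum_sub_distrib]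
    rw [esScore, esWeight, esWeight, Finset.sum_filter, Finset.sum_filter]
  rw [e1]
  calc ∑ h ∈ E, (if h ∩ insert v O = ∅ then
          (2 : ℚ) ^ ((((insert u X) ∩ h).card : ℤ) - (h.card : ℤ)) else 0)
      ≤ esScore E X O - esWeight E X O v + esWeight E X O u := by rw [← e2]; exact hsum
    _ ≤ esScore E X O := by linarith
end

section
/- If Breaker (moving second) has a winning strategy in the Maker-Breaker game on a hypergraph H₁ and also on a vertex-disjoint hypergraph H₂, then Breaker has a winning strategy in the Maker-Breaker game on the disjoint union H₁ ∪̇ H₂. -/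
/-- `MakerWins E t free M B` : in the Maker-Breaker game with winning sets `E`,
unclaimed vertices `free`, Maker's vertices `M` and Breaker's vertices `B`, the
player to move being Maker if `t = true` and Breaker if `t = false`, Maker has a
strategy ensuring he eventually occupies all vertices of some hyperedge. -/
inductive MakerWins {α : Type*} [DecidableEq α] (E : Finset (Finset α)) :
    Bool → Finset α → Finset α → Finset α → Prop where
  | won {t : Bool} {free M B : Finset α} (e : Finset α) (he : e ∈ E)
      (hsub : e ⊆ M) : MakerWins E t free M B
  | makerMove {free M B : Finset α} (v : α) (hv : v ∈ free)
      (h : MakerWins E false (free.erase v) (insert v M) B) :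
      MakerWins E true free M B
  | breakerMove {free M B : Finset α} (hne : free.Nonempty)
      (h : ∀ v ∈ free, MakerWins E true (free.erase v) M (insert v B)) :
      MakerWins E false free M B

/-- `BreakerWins E t free M B` : in the Maker-Breaker game with winning sets `E`,
unclaimed vertices `free`, Maker's vertices `M` and Breaker's vertices `B`, the
player to move being Maker if `t = true` and Breaker if `t = false`, Breaker has a
strategy ensuring that when all vertices are claimed, no hyperedge is fully
claimed by Maker. -/
inductive BreakerWins {α : Type*} [DecidableEq α] (E : Finset (Finset α)) :
    Bool → Finset α → Finset α → Finset α → Prop where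
  | gameOver {t : Bool} {M B : Finset α} (h : ∀ e ∈ E, ¬ e ⊆ M) :
      BreakerWins E t ∅ M B
  | makerMove {free M B : Finset α} (h0 : ∀ e ∈ E, ¬ e ⊆ M)
      (h : ∀ v ∈ free, BreakerWins E false (free.erase v) (insert v M) B) :
      BreakerWins E true free M B
  | breakerMove {free M B : Finset α} (v : α) (h0 : ∀ e ∈ E, ¬ e ⊆ M)
      (hv : v ∈ free)
      (h : BreakerWins E true (free.erase v) M (insert v B)) :
      BreakerWins E false free M B

/-- In any position where Breaker wins, Maker has not yet completed an edge. -/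
theorem BreakerWins.h0' {α : Type*} [DecidableEq α] {E : Finset (Finset α)}
    {t : Bool} {free M B : Finset α} (h : BreakerWins E t free M B) :
    ∀ e ∈ E, ¬ e ⊆ M := by
  cases h <;> assumption

/-- Breaker's own set of vertices is irrelevant. -/
theorem BreakerWins.anyB {α : Type*} [DecidableEq α] {E : Finset (Finset α)}
    {t : Bool} {free M B : Finset α} (h : BreakerWins E t free M B) (B' : Finset α) :
    BreakerWins E t free M B' := by
  induction h generalizing B' with
  | gameOver h => exact .gameOver h
  | makerMove h0 h ih => exact .makerMove h0 (fun v hv => ih v hv B')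
  | breakerMove v h0 hv h ih => exact .breakerMove v h0 hv (ih _)

/-- Removing a free vertex (an extra free move for Breaker) preserves a Breaker win. -/
theorem BreakerWins.erase {α : Type*} [DecidableEq α] {E : Finset (Finset α)}
    {t : Bool} {free M B : Finset α} (h : BreakerWins E t free M B)
    {w : α} (hw : w ∈ free) (B' : Finset α) :
    BreakerWins E t (free.erase w) M B' := by
  induction h generalizing w B' with
  | gameOver h => exact absurd hw (Finset.notMem_empty _)
  | @makerMove free M B h0 h ih =>
    refine .makerMove h0 (fun v hv => ?_)
    rw [Finset.erase_right_comm]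
    exact ih v (Finset.mem_of_mem_erase hv)
      (Finset.mem_erase.2 ⟨fun e => (Finset.mem_erase.1 hv).1 e.symm, hw⟩) B'
  | @breakerMove free M B v h0 hv h ih =>
    by_cases hvw : v = w
    · subst hvw
      rcases Finset.eq_empty_or_nonempty (free.erase v) with he | ⟨u, hu⟩
      · rw [he]; exact .gameOver h.h0'
      · exact .breakerMove u h0 hu (ih hu _)
    · refine .breakerMove v h0 (Finset.mem_erase.2 ⟨hvw, hv⟩) ?_
      rw [Finset.erase_right_comm]
      exact ih (Finset.mem_erase.2 ⟨fun e => hvw e.symm, hw⟩) _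

/-- Combining "no completed edge" facts across the two components. -/
theorem union_h0 {α : Type*} [DecidableEq α] {V₁ V₂ M₁ M₂ : Finset α}
    {E₁ E₂ : Finset (Finset α)} (hV : Disjoint V₁ V₂)
    (hE₁ : ∀ e ∈ E₁, e ⊆ V₁) (hE₂ : ∀ e ∈ E₂, e ⊆ V₂)
    (hM₁ : M₁ ⊆ V₁) (hM₂ : M₂ ⊆ V₂)
    (h01 : ∀ e ∈ E₁, ¬ e ⊆ M₁) (h02 : ∀ e ∈ E₂, ¬ e ⊆ M₂) :
    ∀ e ∈ E₁ ∪ E₂, ¬ e ⊆ M₁ ∪ M₂ := by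
  intro e he hsub
  rcases Finset.mem_union.1 he with he | he
  · refine h01 e he (fun x hx => ?_)
    rcases Finset.mem_union.1 (hsub hx) with h | h
    · exact h
    · exact absurd (hE₁ e he hx) (Finset.disjoint_right.1 hV (hM₂ h))
  · refine h02 e he (fun x hx => ?_)
    rcases Finset.mem_union.1 (hsub hx) with h | h
    · exact absurd (hE₂ e he hx) (Finset.disjoint_left.1 hV (hM₁ h))
    · exact h

/-- The key combination lemma, by induction on the number of free vertices. -/
theorem bw_union {α : Type*} [DecidableEq α] :
    ∀ n : ℕ, ∀ (V₁ V₂ : Finset α) (E₁ E₂ : Finset (Finset α)),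
    Disjoint V₁ V₂ → (∀ e ∈ E₁, e ⊆ V₁) → (∀ e ∈ E₂, e ⊆ V₂) →
    ∀ free₁ free₂ M₁ M₂ B : Finset α, (free₁ ∪ free₂).card ≤ n →
    free₁ ⊆ V₁ → free₂ ⊆ V₂ → M₁ ⊆ V₁ → M₂ ⊆ V₂ →
    BreakerWins E₁ true free₁ M₁ ∅ → BreakerWins E₂ true free₂ M₂ ∅ →
    BreakerWins (E₁ ∪ E₂) true (free₁ ∪ free₂) (M₁ ∪ M₂) B := by
  intro n
  induction n with
  | zero =>
    intro V₁ V₂ E₁ E₂ hV hE₁ hE₂ free₁ free₂ M₁ M₂ B hcard hf₁ hf₂ hM₁ hM₂ h₁ h₂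
    rw [Finset.card_eq_zero.1 (Nat.le_zero.1 hcard)]
    exact .gameOver (union_h0 hV hE₁ hE₂ hM₁ hM₂ h₁.h0' h₂.h0')
  | succ n ih =>
    have step : ∀ (V₁ V₂ : Finset α) (E₁ E₂ : Finset (Finset α)),
        Disjoint V₁ V₂ → (∀ e ∈ E₁, e ⊆ V₁) → (∀ e ∈ E₂, e ⊆ V₂) →
        ∀ free₁ free₂ M₁ M₂ B : Finset α, (free₁ ∪ free₂).card ≤ n + 2 →
        free₁ ⊆ V₁ → free₂ ⊆ V₂ → M₁ ⊆ V₁ → M₂ ⊆ V₂ →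
        BreakerWins E₁ true free₁ M₁ ∅ → BreakerWins E₂ true free₂ M₂ ∅ →
        ∀ v ∈ free₁,
        BreakerWins (E₁ ∪ E₂) false ((free₁ ∪ free₂).erase v)
          (insert v (M₁ ∪ M₂)) B := by
      intro V₁ V₂ E₁ E₂ hV hE₁ hE₂ free₁ free₂ M₁ M₂ B hcard hf₁ hf₂ hM₁ hM₂ h₁ h₂ v hv
      have hdisj : Disjoint free₁ free₂ := hV.mono hf₁ hf₂
      have hvV₁ : v ∈ V₁ := hf₁ hv
      have hv2 : v ∉ free₂ := fun h => Finset.disjoint_left.1 hdisj hv h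
      have hM₁' : insert v M₁ ⊆ V₁ := Finset.insert_subset hvV₁ hM₁
      have hset : (free₁ ∪ free₂).erase v = free₁.erase v ∪ free₂ := by
        rw [Finset.erase_union_distrib, Finset.erase_eq_of_notMem hv2]
      have hcardU : (free₁ ∪ free₂).card = free₁.card + free₂.card :=
        Finset.card_union_of_disjoint hdisj
      have hcard₁ : 1 ≤ free₁.card := Finset.card_pos.2 ⟨v, hv⟩
      have hF : BreakerWins E₁ false (free₁.erase v) (insert v M₁) ∅ := by
        cases h₁ with
        | gameOver _ => exact absurd hv (Finset.notMem_empty _)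
        | makerMove h0₁ hresp => exact hresp v hv
      rw [hset, ← Finset.insert_union]
      obtain ⟨f, hfe⟩ : ∃ f, free₁.erase v = f := ⟨_, rfl⟩
      rw [hfe] at hF ⊢
      cases hF with
      | gameOver h0₁' =>
        rw [Finset.empty_union]
        have h0c := union_h0 hV hE₁ hE₂ hM₁' hM₂ h0₁' h₂.h0'
        rcases Finset.eq_empty_or_nonempty free₂ with he₂ | ⟨w, hw⟩
        · rw [he₂]
          exact .gameOver h0c
        · refine .breakerMove w h0c hw ?_
          have hkey := ih V₁ V₂ E₁ E₂ hV hE₁ hE₂ ∅ (free₂.erase w)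
            (insert v M₁) M₂ (insert w B)
            (by
              rw [Finset.empty_union, Finset.card_erase_of_mem hw]
              have : 1 ≤ free₂.card := Finset.card_pos.2 ⟨w, hw⟩
              omega)
            (Finset.empty_subset _) ((Finset.erase_subset _ _).trans hf₂) hM₁' hM₂
            (.gameOver h0₁') (h₂.erase hw ∅)
          rw [Finset.empty_union] at hkey
          exact hkey
      | breakerMove w h0₁' hw hT =>
        subst hfe
        have h0c := union_h0 hV hE₁ hE₂ hM₁' hM₂ h0₁' h₂.h0'
        have hw1 : w ∈ free₁ := Finset.mem_of_mem_erase hw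
        have hw2 : w ∉ free₂ := fun h => Finset.disjoint_left.1 hdisj hw1 h
        refine .breakerMove w h0c (Finset.mem_union_left _ hw) ?_
        have hcard₂ : 2 ≤ free₁.card := by
          have h1 := Finset.card_erase_of_mem hv
          have h2 : 1 ≤ (free₁.erase v).card := Finset.card_pos.2 ⟨w, hw⟩
          omega
        have hkey := ih V₁ V₂ E₁ E₂ hV hE₁ hE₂ ((free₁.erase v).erase w) free₂
          (insert v M₁) M₂ (insert w B)
          (by
            rw [Finset.card_union_of_disjoint
              (hdisj.mono_left ((Finset.erase_subset _ _).trans (Finset.erase_subset _ _)))]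
            rw [Finset.card_erase_of_mem hw, Finset.card_erase_of_mem hv]
            omega)
          (((Finset.erase_subset _ _).trans (Finset.erase_subset _ _)).trans hf₁) hf₂ hM₁' hM₂
          (hT.anyB ∅) h₂
        have hss : (free₁.erase v ∪ free₂).erase w = (free₁.erase v).erase w ∪ free₂ := by
          rw [Finset.erase_union_distrib, Finset.erase_eq_of_notMem hw2]
        rw [hss]
        exact hkey
    intro V₁ V₂ E₁ E₂ hV hE₁ hE₂ free₁ free₂ M₁ M₂ B hcard hf₁ hf₂ hM₁ hM₂ h₁ h₂
    rcases Finset.eq_empty_or_nonempty (free₁ ∪ free₂) with he | hne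
    · rw [he]
      exact .gameOver (union_h0 hV hE₁ hE₂ hM₁ hM₂ h₁.h0' h₂.h0')
    · refine .makerMove (union_h0 hV hE₁ hE₂ hM₁ hM₂ h₁.h0' h₂.h0') (fun v hvmem => ?_)
      rcases Finset.mem_union.1 hvmem with hv | hv
      · exact step V₁ V₂ E₁ E₂ hV hE₁ hE₂ free₁ free₂ M₁ M₂ B
          (hcard.trans (by omega)) hf₁ hf₂ hM₁ hM₂ h₁ h₂ v hv
      · rw [Finset.union_comm E₁ E₂, Finset.union_comm free₁ free₂, Finset.union_comm M₁ M₂]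
        exact step V₂ V₁ E₂ E₁ hV.symm hE₂ hE₁ free₂ free₁ M₂ M₁ B
          (by rw [Finset.union_comm]; exact hcard.trans (by omega))
          hf₂ hf₁ hM₂ hM₁ h₂ h₁ v hv

/-- If Breaker wins Maker-Breaker on `H₁` and on a vertex-disjoint `H₂`, then
Breaker wins on the disjoint union. -/
theorem breakerWins_disjUnion {α : Type*} [DecidableEq α]
    (V₁ V₂ : Finset α) (E₁ E₂ : Finset (Finset α)) (hV : Disjoint V₁ V₂)
    (hE₁ : ∀ e ∈ E₁, e ⊆ V₁) (hE₂ : ∀ e ∈ E₂, e ⊆ V₂)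
    (h₁ : BreakerWins E₁ true V₁ ∅ ∅) (h₂ : BreakerWins E₂ true V₂ ∅ ∅) :
    BreakerWins (E₁ ∪ E₂) true (V₁ ∪ V₂) ∅ ∅ := by
  have := bw_union (V₁ ∪ V₂).card V₁ V₂ E₁ E₂ hV hE₁ hE₂ V₁ V₂ ∅ ∅ ∅ le_rfl
    subset_rfl subset_rfl (Finset.empty_subset _) (Finset.empty_subset _) h₁ h₂
  simpa using this
end
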